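/- arXiv:2103.00386 — 3 statements merged into one kernel-verified Lean document; each statement's English description precedes it below -/
import Mathlib

section
/- Let R be a dwindling convergent SRS over a finite alphabet Σ, let A be a nonempty irreducible string and X a nonempty string over Σ, and suppose A·X →*_R S. Then there exist b ≤ |A| and a strictly increasing index sequence β = (β1, β2, …, βc) with 1 ≤ β1 < β2 < ⋯ < βc ≤ |X| such that S = A_[1:b] · X_[β]. Moreover, if S ≠ A·X then c < |X|. -/
/- Strings over an alphabet `σ` are modelled as `List σ`; a finite string
rewriting system is a finite list of rules `(l, r)`. -/

namespace SRS

variable {σ : Type*}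

/-- One-step rewrite relation: `u →_R v`. -/
def Step (R : List (List σ × List σ)) (u v : List σ) : Prop :=
  ∃ x y l r, (l, r) ∈ R ∧ u = x ++ l ++ y ∧ v = x ++ r ++ y

/-- `u →*_R v`: reflexive-transitive closure. -/
def Reduces (R : List (List σ × List σ)) : List σ → List σ → Prop :=
  Relation.ReflTransGen (Step R)

/-- `u ↔*_R v`: reflexive-symmetric-transitive closure. -/
def Equiv (R : List (List σ × List σ)) : List σ → List σ → Prop :=
  Relation.EqvGen (Step R)

/-- `u ↓_R v`: joinability, i.e. a common reduct exists. -/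
def Joins (R : List (List σ × List σ)) : List σ → List σ → Prop :=
  Relation.Join (Reduces R)

/-- A string is irreducible if no rule applies to it. -/
def Irreducible (R : List (List σ × List σ)) (u : List σ) : Prop :=
  ∀ v, ¬ Step R u v

/-- `u →!_R v`: `v` is an `R`-normal form of `u`. -/
def NormalizesTo (R : List (List σ × List σ)) (u v : List σ) : Prop :=
  Reduces R u v ∧ Irreducible R v

/-- Terminating: no infinite chain of rewrite steps. -/
def Terminating (R : List (List σ × List σ)) : Prop :=
  ¬ ∃ f : ℕ → List σ, ∀ n, Step R (f n) (f (n + 1))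

def Confluent (R : List (List σ × List σ)) : Prop :=
  ∀ t s₁ s₂, Reduces R t s₁ → Reduces R t s₂ →
    ∃ t', Reduces R s₁ t' ∧ Reduces R s₂ t'

def Convergent (R : List (List σ × List σ)) : Prop :=
  Terminating R ∧ Confluent R

/-- Dwindling: every right-hand side is a proper prefix of its left-hand side. -/
def Dwindling (R : List (List σ × List σ)) : Prop :=
  ∀ p ∈ R, p.2 <+: p.1 ∧ p.2 ≠ p.1

/-- Monadic: length-reducing with right-hand sides of length at most 1. -/
def Monadic (R : List (List σ × List σ)) : Prop :=
  ∀ p ∈ R, p.2.length < p.1.length ∧ p.2.length ≤ 1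

/-- `MP α`: normal forms of `p ++ s` with `p` a prefix of `α` and `s` a single
symbol or the empty string. -/
def MP (R : List (List σ × List σ)) (α : List σ) : Set (List σ) :=
  { γ | ∃ p s, p <+: α ∧ s.length ≤ 1 ∧ NormalizesTo R (p ++ s) γ }

end SRS

/-- `subseqIdx X β` is the string `X_[β]` = `X_[β₁] X_[β₂] ⋯ X_[β_c]` for a
1-indexed index sequence `β` (each index `i` selects the `i`-th symbol of `X`). -/
def subseqIdx {σ : Type*} (X : List σ) (β : List ℕ) : List σ :=
  (β.map fun i => (X.drop (i - 1)).take 1).flatten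

/-! A dwindling rule deletes a nonempty block of the string and leaves everything else in order.
In a string `P ++ Y` with `P` a prefix of the irreducible `A`, the deleted block cannot lie
inside `P`, so it removes a nonempty part of `Y` and possibly a suffix of `P`. The shape
"prefix of `A`, then a subsequence of `X`" is therefore preserved by every step, and each step
makes the subsequence strictly shorter. -/

namespace SRS

variable {σ : Type*} {R : List (List σ × List σ)}

theorem Irreducible.of_isInfix {A P : List σ} (hA : Irreducible R A) (hP : P <:+: A) :
    Irreducible R P := by
  rintro v ⟨x, y, l, r, hR, rfl, rfl⟩
  obtain ⟨w, z, rfl⟩ := hP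
  exact hA _ ⟨w ++ x, y ++ z, l, r, hR, by simp, rfl⟩

theorem Dwindling.step_append_of_irreducible {P Y T : List σ} (hdw : Dwindling R)
    (hP : Irreducible R P) (h : Step R (P ++ Y) T) :
    ∃ P' Y', P' <+: P ∧ Y'.Sublist Y ∧ Y'.length < Y.length ∧ T = P' ++ Y' := by
  obtain ⟨x, y, l, r, hR, hPY, rfl⟩ := h
  obtain ⟨⟨d, hd⟩, hne⟩ := hdw (l, r) hR
  replace hd : r ++ d = l := hd
  subst hd
  have hdne : d ≠ [] := by simpa using hne
  have hredex : ∀ z, P ≠ x ++ (r ++ d) ++ z := fun z hz => hP _ ⟨x, z, _, r, hR, hz, rfl⟩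
  rw [show x ++ (r ++ d) ++ y = (x ++ r) ++ (d ++ y) by simp, List.append_eq_append_iff] at hPY
  rcases hPY with ⟨u, hxr, rfl⟩ | ⟨c, rfl, hdy⟩
  · -- the deleted block `d` lies inside `Y`
    refine ⟨P, u ++ y, List.prefix_refl P, ?_, ?_, by simp [hxr]⟩
    · exact (List.sublist_append_right d y).append_left u
    · simpa using List.length_pos_iff.mpr hdne
  · rw [List.append_eq_append_iff] at hdy
    rcases hdy with ⟨a, rfl, -⟩ | ⟨e, rfl, rfl⟩
    · exact absurd (by simp) (hredex a)
    · -- `d` deletes a suffix of `P` and the nonempty prefix `e` of `Y`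
      have he : e ≠ [] := by
        rintro rfl
        exact hredex [] (by simp)
      refine ⟨x ++ r, y, List.prefix_append _ _, List.sublist_append_right e y, ?_, rfl⟩
      simpa using List.length_pos_iff.mpr he

theorem Dwindling.reduces_append_of_irreducible {P Y S : List σ} (hdw : Dwindling R)
    (hP : Irreducible R P) (h : Reduces R (P ++ Y) S) :
    ∃ P' Y', P' <+: P ∧ Y'.Sublist Y ∧ S = P' ++ Y' ∧ (S = P ++ Y ∨ Y'.length < Y.length) := by
  induction h with
  | refl => exact ⟨P, Y, List.prefix_refl P, List.Sublist.refl Y, rfl, Or.inl rfl⟩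
  | tail _ hstep ih =>
    obtain ⟨P₁, Y₁, hP₁, hY₁, rfl, -⟩ := ih
    obtain ⟨P₂, Y₂, hP₂, hY₂, hlt, rfl⟩ :=
      hdw.step_append_of_irreducible (hP.of_isInfix hP₁.isInfix) hstep
    exact ⟨P₂, Y₂, hP₂.trans hP₁, hY₂.trans hY₁, rfl, Or.inr (hlt.trans_le hY₁.length_le)⟩

end SRS

theorem subseqIdx_cons_map_succ {σ : Type*} (a : σ) (X : List σ) {β : List ℕ}
    (hβ : ∀ i ∈ β, 1 ≤ i) : subseqIdx (a :: X) (β.map (· + 1)) = subseqIdx X β := by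
  unfold subseqIdx
  congr 1
  rw [List.map_map]
  refine List.map_congr_left fun i hi => ?_
  obtain ⟨j, rfl⟩ := Nat.exists_eq_add_of_le' (hβ i hi)
  simp

theorem exists_subseqIdx_eq_of_sublist {σ : Type*} {Y X : List σ} (h : Y.Sublist X) :
    ∃ β : List ℕ, β.IsChain (· < ·) ∧ (∀ i ∈ β, 1 ≤ i ∧ i ≤ X.length) ∧
      β.length = Y.length ∧ Y = subseqIdx X β := by
  induction h with
  | slnil => exact ⟨[], List.IsChain.nil, by simp, rfl, rfl⟩
  | cons a _ ih =>
    obtain ⟨β, hchain, hmem, hlen, rfl⟩ := ih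
    refine ⟨β.map (· + 1), ?_, ?_, by simpa using hlen, ?_⟩
    · exact List.isChain_map_of_isChain (· + 1) (fun _ _ => Nat.succ_lt_succ) hchain
    · simpa using fun i hi => (hmem i hi).2
    · exact (subseqIdx_cons_map_succ a _ fun i hi => (hmem i hi).1).symm
  | cons_cons a _ ih =>
    obtain ⟨β, hchain, hmem, hlen, rfl⟩ := ih
    refine ⟨1 :: β.map (· + 1), ?_, ?_, by simpa using hlen, ?_⟩
    · refine List.isChain_cons.mpr ⟨fun y hy => ?_,
        List.isChain_map_of_isChain (· + 1) (fun _ _ => Nat.succ_lt_succ) hchain⟩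
      obtain ⟨i, hi, rfl⟩ := List.mem_map.mp (List.mem_of_mem_head? hy)
      exact Nat.succ_lt_succ (hmem i hi).1
    · simpa using fun i hi => (hmem i hi).2
    · symm
      rw [subseqIdx, List.map_cons, List.flatten_cons, ← subseqIdx,
        subseqIdx_cons_map_succ a _ fun i hi => (hmem i hi).1]
      rfl

theorem dwindling_reduct_decomposition_general {σ : Type*}
    (R : List (List σ × List σ)) (hdw : SRS.Dwindling R)
    (A X S : List σ) (hAirr : SRS.Irreducible R A)
    (h : SRS.Reduces R (A ++ X) S) :
    ∃ (b : ℕ) (β : List ℕ), b ≤ A.length ∧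
      β.Chain' (· < ·) ∧
      (∀ i ∈ β, 1 ≤ i ∧ i ≤ X.length) ∧
      S = A.take b ++ subseqIdx X β ∧
      (S ≠ A ++ X → β.length < X.length) := by
  obtain ⟨P, Y, hP, hY, rfl, hshort⟩ := hdw.reduces_append_of_irreducible hAirr h
  obtain ⟨β, hchain, hmem, hlen, rfl⟩ := exists_subseqIdx_eq_of_sublist hY
  refine ⟨P.length, β, hP.length_le, hchain, hmem, by rw [← List.prefix_iff_eq_take.mp hP],
    fun hne => hlen ▸ hshort.resolve_left hne⟩

/-- If `R` is dwindling and convergent, `A` is nonempty and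
irreducible, `X` is nonempty, and `A ++ X →*_R S`, then
`S = A_[1:b] ++ X_[β]` for some `b ≤ |A|` and strictly increasing index
sequence `β` with indices in `{1, …, |X|}`; moreover `|β| < |X|` whenever
`S ≠ A ++ X`. -/
theorem dwindling_reduct_decomposition {σ : Type*} [Fintype σ]
    (R : List (List σ × List σ)) (hdw : SRS.Dwindling R) (hconv : SRS.Convergent R)
    (A X S : List σ) (hA : A ≠ []) (hAirr : SRS.Irreducible R A) (hX : X ≠ [])
    (h : SRS.Reduces R (A ++ X) S) :
    ∃ (b : ℕ) (β : List ℕ), b ≤ A.length ∧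
      β.Chain' (· < ·) ∧
      (∀ i ∈ β, 1 ≤ i ∧ i ≤ X.length) ∧
      S = A.take b ++ subseqIdx X β ∧
      (S ≠ A ++ X → β.length < X.length) :=
  dwindling_reduct_decomposition_general R hdw A X S hAirr h
end

section
/- Let R be a dwindling convergent SRS over a finite alphabet Σ, let α be a nonempty irreducible string over Σ, and let W be a minimal-length string over Σ satisfying α·W ↔*_R W (i.e., W satisfies this relation and no strictly shorter string does). Then the first symbol of W equals the first symbol of α, i.e., W_[1] = α_[1]. -/
section AuxLemmas

open SRS

variable {σ : Type*} {R : List (List σ × List σ)}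

lemma aux_rule_lhs_ne_nil (hdw : Dwindling R) {l r : List σ} (h : (l, r) ∈ R) : l ≠ [] := by
  rcases hdw _ h with ⟨hpre, hne⟩
  rintro rfl
  exact hne (List.prefix_nil.mp hpre)

lemma aux_step_length (hdw : Dwindling R) {u v : List σ} (h : Step R u v) :
    v.length < u.length := by
  obtain ⟨x, y, l, r, hm, rfl, rfl⟩ := h
  rcases hdw _ hm with ⟨hpre, hne⟩
  have hle : r.length ≤ l.length := hpre.length_le
  have hlt : r.length < l.length := by
    rcases lt_or_eq_of_le hle with h | h
    · exact h
    · exact absurd (hpre.eq_of_length h) hne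
  simp only [List.length_append]
  omega

lemma aux_reduces_length {u v : List σ} (hdw : Dwindling R) (h : Reduces R u v) :
    v.length ≤ u.length := by
  induction h with
  | refl => exact le_rfl
  | tail _ hstep ih => exact le_trans (aux_step_length hdw hstep).le ih

lemma aux_step_append_right {u v w : List σ} (h : Step R u v) :
    Step R (u ++ w) (v ++ w) := by
  obtain ⟨x, y, l, r, hm, rfl, rfl⟩ := h
  exact ⟨x, y ++ w, l, r, hm, by simp, by simp⟩

lemma aux_step_append_left {u v p : List σ} (h : Step R u v) :
    Step R (p ++ u) (p ++ v) := by
  obtain ⟨x, y, l, r, hm, rfl, rfl⟩ := h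
  exact ⟨p ++ x, y, l, r, hm, by simp, by simp⟩

lemma aux_reduces_equiv {u v : List σ} (h : Reduces R u v) : Equiv R u v := by
  induction h with
  | refl => exact Relation.EqvGen.refl u
  | tail _ hstep ih => exact ih.trans _ _ _ (Relation.EqvGen.rel _ _ hstep)

lemma aux_equiv_append_left {u v : List σ} (p : List σ) (h : Equiv R u v) :
    Equiv R (p ++ u) (p ++ v) := by
  induction h with
  | rel a b hab => exact Relation.EqvGen.rel _ _ (aux_step_append_left hab)
  | refl a => exact Relation.EqvGen.refl _
  | symm a b _ ih => exact ih.symm _ _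
  | trans a b c _ _ ih1 ih2 => exact ih1.trans _ _ _ ih2

lemma aux_irreducible_reduces_eq {u v : List σ} (hu : Irreducible R u)
    (h : Reduces R u v) : v = u := by
  rcases (Relation.ReflTransGen.cases_head h) with rfl | ⟨w, hw, _⟩
  · rfl
  · exact absurd hw (hu w)

lemma aux_equiv_joins (hconf : Confluent R) {u v : List σ} (h : Equiv R u v) :
    Joins R u v := by
  induction h with
  | rel a b hab => exact ⟨b, Relation.ReflTransGen.single hab, Relation.ReflTransGen.refl⟩
  | refl a => exact ⟨a, Relation.ReflTransGen.refl, Relation.ReflTransGen.refl⟩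
  | symm a b _ ih => obtain ⟨t, h1, h2⟩ := ih; exact ⟨t, h2, h1⟩
  | trans a b c _ _ ih1 ih2 =>
      obtain ⟨t1, ha, hb⟩ := ih1
      obtain ⟨t2, hb', hc⟩ := ih2
      obtain ⟨t, h1, h2⟩ := hconf b t1 t2 hb hb'
      exact ⟨t, ha.trans h1, hc.trans h2⟩

lemma aux_exists_nf (hdw : Dwindling R) (u : List σ) :
    ∃ v, Reduces R u v ∧ Irreducible R v := by
  by_cases h : Irreducible R u
  · exact ⟨u, Relation.ReflTransGen.refl, h⟩
  · obtain ⟨v, hv⟩ := not_forall_not.mp h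
    have hlt := aux_step_length hdw hv
    obtain ⟨w, hw, hirr⟩ := aux_exists_nf hdw v
    exact ⟨w, (Relation.ReflTransGen.single hv).trans hw, hirr⟩
termination_by u.length

lemma aux_irreducible_prefix {u v : List σ} (hu : Irreducible R u) (h : v <+: u) :
    Irreducible R v := by
  obtain ⟨z, rfl⟩ := h
  rintro w ⟨x, y, l, r, hm, rfl, rfl⟩
  exact hu (x ++ r ++ (y ++ z)) ⟨x, y ++ z, l, r, hm, by simp, rfl⟩

lemma aux_irreducible_suffix {u v : List σ} (hu : Irreducible R u) (h : v <:+ u) :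
    Irreducible R v := by
  obtain ⟨z, rfl⟩ := h
  rintro w ⟨x, y, l, r, hm, rfl, rfl⟩
  exact hu (z ++ x ++ r ++ y) ⟨z ++ x, y, l, r, hm, by simp, by simp⟩

/-- Key dwindling lemma: any one-step reduct of `N ++ [c]` with `N` irreducible
is a prefix of `N`. -/
lemma aux_key (hdw : Dwindling R) {N : List σ} {c : σ} {v : List σ}
    (hN : Irreducible R N) (h : Step R (N ++ [c]) v) : v <+: N := by
  obtain ⟨x, y, l, r, hm, heq, rfl⟩ := h
  rcases hdw _ hm with ⟨hpre, hne⟩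
  have hlne : l ≠ [] := aux_rule_lhs_ne_nil hdw hm
  have hrlt : r.length < l.length := by
    have hle : r.length ≤ l.length := hpre.length_le
    rcases lt_or_eq_of_le hle with h' | h'
    · exact h'
    · exact absurd (hpre.eq_of_length h') hne
  rcases y.eq_nil_or_concat with rfl | ⟨y', d, rfl⟩
  · -- redex at the end: the result is a proper prefix of N ++ [c], hence a prefix of N
    have hvpre : x ++ r ++ [] <+: N ++ [c] := by
      simp only [List.append_nil]
      rw [heq]
      obtain ⟨t, ht⟩ := hpre
      exact ⟨t, by simp only at ht; rw [← ht]; simp⟩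
    have hNpre : N <+: N ++ [c] := List.prefix_append N [c]
    have hlen : (x ++ r ++ []).length ≤ N.length := by
      have h1 : (N ++ [c]).length = (x ++ l ++ ([] : List σ)).length := by rw [heq]
      simp only [List.length_append, List.length_nil, List.length_cons] at h1 ⊢
      omega
    exact List.prefix_of_prefix_length_le hvpre hNpre hlen
  · -- redex strictly inside N : contradiction with irreducibility of N
    have heq' : N ++ [c] = (x ++ l ++ y') ++ [d] := by
      rw [heq]; simp
    obtain ⟨hN', -⟩ := List.append_inj' heq' rfl
    exact absurd ⟨x, y', l, r, hm, hN', rfl⟩ (hN _)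

lemma aux_head?_of_prefix {u v : List σ} (h : v <+: u) (hv : v ≠ []) :
    v.head? = u.head? := by
  obtain ⟨z, rfl⟩ := h
  cases v with
  | nil => exact absurd rfl hv
  | cons a t => simp

/-- Main induction: scanning the remaining suffix `w1` of `W`, the irreducible
prefix-state `N` stays nonempty with unchanged head. -/
lemma aux_main (hdw : Dwindling R) (hconf : Confluent R) {W : List σ}
    (hWirr : Irreducible R W) (a : Option σ) :
    ∀ w1 : List σ, w1 <:+ W → ∀ N : List σ, Irreducible R N → N ≠ [] →
      N.head? = a → Reduces R (N ++ w1) W → W.head? = a := by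
  intro w1
  induction w1 with
  | nil =>
    intro _ N hNirr _ ha hred
    have hWN : W = N := aux_irreducible_reduces_eq hNirr (by simpa using hred)
    rw [hWN]; exact ha
  | cons c w1' ih =>
    intro hsuf N hNirr hNne ha hred
    have hsuf' : w1' <:+ W := (List.suffix_cons c w1').trans hsuf
    have hred2 : Reduces R ((N ++ [c]) ++ w1') W := by
      simpa [List.append_assoc] using hred
    by_cases hi : Irreducible R (N ++ [c])
    · refine ih hsuf' (N ++ [c]) hi (by simp) ?_ hred2
      rw [← aux_head?_of_prefix (List.prefix_append N [c]) hNne]; exact ha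
    · obtain ⟨v, hv⟩ := not_forall_not.mp hi
      have hpre : v <+: N := aux_key hdw hNirr hv
      have hvirr : Irreducible R v := aux_irreducible_prefix hNirr hpre
      have hstep : Step R ((N ++ [c]) ++ w1') (v ++ w1') := aux_step_append_right hv
      have hred' : Reduces R (v ++ w1') W := by
        obtain ⟨t, h1, h2⟩ := hconf ((N ++ [c]) ++ w1') W (v ++ w1') hred2
          (Relation.ReflTransGen.single hstep)
        have ht : t = W := aux_irreducible_reduces_eq hWirr h1
        rw [ht] at h2; exact h2
      rcases eq_or_ne v [] with rfl | hvne
      · exfalso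
        have hirr' : Irreducible R w1' := aux_irreducible_suffix hWirr hsuf'
        have : W = w1' := aux_irreducible_reduces_eq hirr' (by simpa using hred')
        have hlen : (c :: w1').length ≤ W.length := hsuf.length_le
        rw [this] at hlen
        simp at hlen
      · exact ih hsuf' v hvirr hvne
          (by rw [aux_head?_of_prefix hpre hvne]; exact ha) hred'

end AuxLemmas

/-- For a dwindling convergent SRS `R` and a nonempty
irreducible string `α`, any minimal-length solution `W` of `α ++ W ↔*_R W`
starts with the same symbol as `α`. -/
theorem minimal_fixed_point_head {σ : Type*} [Fintype σ]
    (R : List (List σ × List σ)) (hdw : SRS.Dwindling R) (hconv : SRS.Convergent R)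
    (α : List σ) (hα : α ≠ []) (hαirr : SRS.Irreducible R α)
    (W : List σ) (hW : SRS.Equiv R (α ++ W) W)
    (hmin : ∀ W' : List σ, SRS.Equiv R (α ++ W') W' → W.length ≤ W'.length) :
    W.head? = α.head? := by
  obtain ⟨hterm, hconf⟩ := hconv
  -- W is irreducible, by minimality
  obtain ⟨W', hredW, hirrW'⟩ := aux_exists_nf hdw W
  have hWirr : SRS.Irreducible R W := by
    have e1 : SRS.Equiv R W W' := aux_reduces_equiv hredW
    have e2 : SRS.Equiv R (α ++ W') W' :=
      (((aux_equiv_append_left α e1).symm _ _).trans _ _ _ hW).trans _ _ _ e1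
    have hlen : W.length ≤ W'.length := hmin W' e2
    rcases Relation.ReflTransGen.cases_head hredW with heq | ⟨u, hu, hu'⟩
    · rw [heq]; exact hirrW'
    · exfalso
      have h1 := aux_step_length hdw hu
      have h2 := aux_reduces_length hdw hu'
      omega
  -- α ++ W reduces to W
  have hred : SRS.Reduces R (α ++ W) W := by
    obtain ⟨t, h1, h2⟩ := aux_equiv_joins hconf hW
    have ht : t = W := aux_irreducible_reduces_eq hWirr h2
    rw [ht] at h1; exact h1
  exact aux_main hdw hconf hWirr α.head? W (List.suffix_refl W) α hαirr hα rfl hred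
end

section
/- Let R be a dwindling convergent SRS over a finite alphabet Σ, let α be a nonempty irreducible string, and let W be a minimal-length string satisfying α·W ↔*_R W. For 0 ≤ j ≤ |W|, let α^(j) denote the R-normal form of α·W_[1:j]. Then for every j with 0 ≤ j < |W| we have |α^(j)| > j and W_[j+1] = α^(j)_[j+1]; that is, each successive symbol of a minimal-length solution W is determined as the (j+1)-st symbol of the normal form of α concatenated with the first j symbols of W. -/
/-!
Dwindling rules shorten strings, so normal forms exist, and appending one symbol `a` to an
irreducible string `u` can only normalize to a prefix of `u ++ [a]`. A minimal solution `W` is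
irreducible and `α ++ W` normalizes to `W`. Going down from `j = |W|`, if `W_[1:j+1]` is a prefix
of `α^(j+1)`, which is a prefix of `α^(j) ++ [W_[j+1]]`, then either `W_[1:j+1]` is already a
prefix of `α^(j)`, or `α^(j) = W_[1:j]`; the latter makes `W_[1:j]` a shorter solution.
-/

namespace SRS

variable {σ : Type*} {R : List (List σ × List σ)} {u v : List σ}

theorem Step.append_right (h : Step R u v) (s : List σ) : Step R (u ++ s) (v ++ s) := by
  obtain ⟨x, y, l, r, hlr, rfl, rfl⟩ := h
  exact ⟨x, y ++ s, l, r, hlr, by simp, by simp⟩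

theorem Step.append_left (h : Step R u v) (p : List σ) : Step R (p ++ u) (p ++ v) := by
  obtain ⟨x, y, l, r, hlr, rfl, rfl⟩ := h
  exact ⟨p ++ x, y, l, r, hlr, by simp, by simp⟩

theorem Reduces.append_right (h : Reduces R u v) (s : List σ) :
    Reduces R (u ++ s) (v ++ s) :=
  Relation.ReflTransGen.lift (· ++ s) (fun _ _ hab => Step.append_right hab s) _ _ h

theorem Reduces.equiv (h : Reduces R u v) : Equiv R u v :=
  Relation.EqvGen.reflTransGen_le_eqvGen (r := Step R) _ _ h

theorem Irreducible.of_prefix (hu : Irreducible R u) (hvu : v <+: u) : Irreducible R v := by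
  obtain ⟨s, rfl⟩ := hvu
  exact fun w hw => hu _ (hw.append_right s)

theorem Irreducible.eq_of_reduces (hu : Irreducible R u) (h : Reduces R u v) : v = u := by
  rcases Relation.ReflTransGen.cases_head h with rfl | ⟨w, huw, -⟩
  · rfl
  · exact absurd huw (hu w)

theorem Confluent.join_of_equiv (hc : Confluent R) (h : Equiv R u v) :
    Relation.Join (Reduces R) u v :=
  (Relation.equivalence_join (r := Relation.ReflTransGen (Step R)) hc).eqvGen_iff.1 <|
    Relation.EqvGen.mono (fun _ b hab => ⟨b, .single hab, .refl⟩) _ _ h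

theorem Confluent.normalizesTo_of_reduces (hc : Confluent R) {N : List σ}
    (hN : NormalizesTo R u N) (h : Reduces R u v) : NormalizesTo R v N := by
  obtain ⟨t, hvt, hNt⟩ := hc u v N h hN.1
  rw [hN.2.eq_of_reduces hNt] at hvt
  exact ⟨hvt, hN.2⟩

theorem Confluent.normalizesTo_unique (hc : Confluent R) {N N' : List σ}
    (hN : NormalizesTo R u N) (hN' : NormalizesTo R u N') : N = N' :=
  hN'.2.eq_of_reduces (hc.normalizesTo_of_reduces hN hN'.1).1

theorem Dwindling.length_lt (hdw : Dwindling R) {l r : List σ} (hlr : (l, r) ∈ R) :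
    r.length < l.length :=
  let ⟨hpre, hne⟩ := hdw _ hlr
  lt_of_le_of_ne hpre.length_le fun h => hne (hpre.eq_of_length h)

theorem Dwindling.step_length_lt (hdw : Dwindling R) (h : Step R u v) :
    v.length < u.length := by
  obtain ⟨x, y, l, r, hlr, rfl, rfl⟩ := h
  have := hdw.length_lt hlr
  simp only [List.length_append]
  omega

theorem Dwindling.exists_normalizesTo (hdw : Dwindling R) (u : List σ) :
    ∃ v, NormalizesTo R u v := by
  by_cases hu : Irreducible R u
  · exact ⟨u, .refl, hu⟩
  · obtain ⟨w, huw⟩ := not_forall_not.1 hu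
    obtain ⟨v, hwv, hv⟩ := hdw.exists_normalizesTo w
    exact ⟨v, .head huw hwv, hv⟩
termination_by u.length
decreasing_by exact hdw.step_length_lt huw

/-- Since `u` is irreducible, the redex must end at the last symbol `a`, and the rule then
cuts at least `a` off. -/
theorem Dwindling.prefix_of_step_append_singleton (hdw : Dwindling R) (hu : Irreducible R u)
    {a : σ} (h : Step R (u ++ [a]) v) : v <+: u := by
  obtain ⟨x, y, l, r, hlr, hxly, rfl⟩ := h
  rcases y.eq_nil_or_concat' with rfl | ⟨y, b, rfl⟩
  · obtain ⟨hpre, hne⟩ := hdw _ hlr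
    rcases l.eq_nil_or_concat' with rfl | ⟨l, c, rfl⟩
    · exact absurd (List.prefix_nil.1 hpre) hne
    · rw [List.append_nil, ← List.append_assoc, List.append_singleton_inj] at hxly
      obtain ⟨rfl, -⟩ := hxly
      rcases List.prefix_concat_iff.1 hpre with h | h
      · exact absurd h hne
      · simpa using h
  · rw [← List.append_assoc, List.append_singleton_inj] at hxly
    obtain ⟨rfl, -⟩ := hxly
    exact absurd ⟨x, y, l, r, hlr, rfl, rfl⟩ (hu _)

theorem Dwindling.prefix_of_reduces_append_singleton (hdw : Dwindling R)
    (hu : Irreducible R u) {a : σ} (h : Reduces R (u ++ [a]) v) : v <+: u ++ [a] := by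
  rcases Relation.ReflTransGen.cases_head h with rfl | ⟨w, hw, hwv⟩
  · exact List.prefix_rfl
  · have hwu := hdw.prefix_of_step_append_singleton hu hw
    rw [(hu.of_prefix hwu).eq_of_reduces hwv]
    exact hwu.trans (List.prefix_append u [a])

section MinimalSolution

variable {α W : List σ}

theorem irreducible_of_minimal_solution (hdw : Dwindling R) (hW : Equiv R (α ++ W) W)
    (hmin : ∀ W', Equiv R (α ++ W') W' → W.length ≤ W'.length) : Irreducible R W := by
  intro v hWv
  have e := Relation.EqvGen.is_equivalence (Step R)
  have hv : Equiv R (α ++ v) v :=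
    e.trans (e.trans (e.symm (.rel _ _ (hWv.append_left α))) hW) (.rel _ _ hWv)
  exact absurd (hmin v hv) (not_le.2 (hdw.step_length_lt hWv))

theorem normalizesTo_of_minimal_solution (hdw : Dwindling R) (hc : Confluent R)
    (hW : Equiv R (α ++ W) W) (hmin : ∀ W', Equiv R (α ++ W') W' → W.length ≤ W'.length) :
    NormalizesTo R (α ++ W) W := by
  have hirr := irreducible_of_minimal_solution hdw hW hmin
  obtain ⟨t, ht, hWt⟩ := hc.join_of_equiv hW
  rw [hirr.eq_of_reduces hWt] at ht
  exact ⟨ht, hirr⟩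

theorem take_succ_prefix_of_minimal_solution (hdw : Dwindling R) (hc : Confluent R)
    (hmin : ∀ W', Equiv R (α ++ W') W' → W.length ≤ W'.length) {j : ℕ} (hj : j < W.length)
    {M N : List σ} (hM : NormalizesTo R (α ++ W.take j) M)
    (hN : NormalizesTo R (α ++ W.take (j + 1)) N) (hWN : W.take (j + 1) <+: N) :
    W.take (j + 1) <+: M := by
  have htake : W.take (j + 1) = W.take j ++ [W[j]] := by
    rw [← List.take_concat_get hj, List.concat_eq_append]
  have hMN : NormalizesTo R (M ++ [W[j]]) N :=
    hc.normalizesTo_of_reduces hN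
      (by rw [htake, ← List.append_assoc]; exact hM.1.append_right _)
  rcases List.prefix_concat_iff.1
      (hWN.trans (hdw.prefix_of_reduces_append_singleton hM.2 hMN.1)) with h | h
  · rw [htake, List.append_left_inj] at h
    subst h
    have := hmin _ hM.1.equiv
    simp only [List.length_take] at this
    omega
  · exact h

theorem take_prefix_of_minimal_solution (hdw : Dwindling R) (hc : Confluent R)
    (hW : Equiv R (α ++ W) W) (hmin : ∀ W', Equiv R (α ++ W') W' → W.length ≤ W'.length)
    {j : ℕ} (hj : j ≤ W.length) {N : List σ} (hN : NormalizesTo R (α ++ W.take j) N) :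
    W.take j <+: N := by
  induction hj using Nat.decreasingInduction generalizing N with
  | self =>
    rw [List.take_length] at hN ⊢
    rw [hc.normalizesTo_unique hN (normalizesTo_of_minimal_solution hdw hc hW hmin)]
  | of_succ j hj ih =>
    obtain ⟨N', hN'⟩ := hdw.exists_normalizesTo (α ++ W.take (j + 1))
    exact (List.take_prefix_take_left j.le_succ).trans
      (take_succ_prefix_of_minimal_solution hdw hc hmin hj hN hN' (ih hN'))

end MinimalSolution

end SRS

theorem minimal_fixed_point_symbols_determined_general {σ : Type*}
    (R : List (List σ × List σ)) (hdw : SRS.Dwindling R) (hconv : SRS.Convergent R)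
    (α : List σ)
    (W : List σ) (hW : SRS.Equiv R (α ++ W) W)
    (hmin : ∀ W' : List σ, SRS.Equiv R (α ++ W') W' → W.length ≤ W'.length) :
    ∀ j < W.length, ∀ N : List σ,
      SRS.NormalizesTo R (α ++ W.take j) N →
      j < N.length ∧ W[j]? = N[j]? := by
  intro j hj N hN
  obtain ⟨N', hN'⟩ := hdw.exists_normalizesTo (α ++ W.take (j + 1))
  have hWN : W.take (j + 1) <+: N :=
    SRS.take_succ_prefix_of_minimal_solution hdw hconv.2 hmin hj hN hN'
      (SRS.take_prefix_of_minimal_solution hdw hconv.2 hW hmin hj hN')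
  have hlen : j < (W.take (j + 1)).length := by
    rw [List.length_take]
    omega
  refine ⟨hlen.trans_le hWN.length_le, ?_⟩
  rw [← List.getElem?_take_of_lt j.lt_succ_self, List.getElem?_eq_getElem hlen]
  exact (List.prefix_iff_getElem?.1 hWN j hlen).symm

/-- For a dwindling convergent SRS `R`, a nonempty irreducible
string `α`, and a minimal-length solution `W` of `α ++ W ↔*_R W`: for every
`j < |W|`, the normal form `α⁽ʲ⁾` of `α ++ W_[1:j]` has length `> j` and the
`(j+1)`-st symbol of `W` equals the `(j+1)`-st symbol of `α⁽ʲ⁾`. -/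
theorem minimal_fixed_point_symbols_determined {σ : Type*} [Fintype σ]
    (R : List (List σ × List σ)) (hdw : SRS.Dwindling R) (hconv : SRS.Convergent R)
    (α : List σ) (hα : α ≠ []) (hαirr : SRS.Irreducible R α)
    (W : List σ) (hW : SRS.Equiv R (α ++ W) W)
    (hmin : ∀ W' : List σ, SRS.Equiv R (α ++ W') W' → W.length ≤ W'.length) :
    ∀ j < W.length, ∀ N : List σ,
      SRS.NormalizesTo R (α ++ W.take j) N →
      j < N.length ∧ W[j]? = N[j]? :=
  minimal_fixed_point_symbols_determined_general R hdw hconv α W hW hmin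
end
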